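/- For all n ≥ k ≥ 1, the coefficient of p^0 in Sf_{n,k}(p,q) equals q^{n−k}·(Gaussian binomial coefficient [n−1 choose k−1]_q). -/
import Mathlib


open Polynomial Finset

variable {R : Type*} [CommRing R]

/-- The p,q-Fibonacci polynomials: F_0 = 0, F_1 = q, F_2 = q^2,
    F_n = q*F_{n-1} + p*F_{n-2} for n ≥ 3. -/
def fibP (p q : R) : ℕ → R
  | 0 => 0
  | 1 => q
  | 2 => q ^ 2
  | n + 3 => q * fibP p q (n + 2) + p * fibP p q (n + 1)

/-- cf_{n,k}(p,q): cf_{0,0}=1, cf_{n,k}=0 if k>n or k<0,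
    cf_{n+1,k} = cf_{n,k-1} + F_n(p,q)*cf_{n,k}. -/
def cfP (p q : R) : ℕ → ℕ → R
  | 0, 0 => 1
  | 0, _ + 1 => 0
  | n + 1, 0 => fibP p q n * cfP p q n 0
  | n + 1, k + 1 => cfP p q n k + fibP p q n * cfP p q n (k + 1)

/-- Sf_{n,k}(p,q): Sf_{0,0}=1, Sf_{n,k}=0 if k>n or k<0,
    Sf_{n+1,k} = Sf_{n,k-1} + F_k(p,q)*Sf_{n,k}. -/
def SfP (p q : R) : ℕ → ℕ → R
  | 0, 0 => 1
  | 0, _ + 1 => 0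
  | n + 1, 0 => fibP p q 0 * SfP p q n 0
  | n + 1, k + 1 => SfP p q n k + fibP p q (k + 1) * SfP p q n (k + 1)

/-- sf_{n,k}(p,q): sf_{0,0}=1, sf_{n,k}=0 if k>n or k<0,
    sf_{n+1,k} = sf_{n,k-1} - F_n(p,q)*sf_{n,k}. -/
def sfP (p q : R) : ℕ → ℕ → R
  | 0, 0 => 1
  | 0, _ + 1 => 0
  | n + 1, 0 => - (fibP p q n * sfP p q n 0)
  | n + 1, k + 1 => sfP p q n k - fibP p q n * sfP p q n (k + 1)

/-- The Gaussian (q-)binomial coefficient, as a polynomial in q over ℤ. -/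
noncomputable def gaussBinom : ℕ → ℕ → Polynomial ℤ
  | _, 0 => 1
  | 0, _ + 1 => 0
  | n + 1, k + 1 => gaussBinom n k + Polynomial.X ^ (k + 1) * gaussBinom n (k + 1)

section Aux

variable {S : Type*} [CommRing S]

lemma fibP_map (f : R →+* S) (p q : R) : ∀ n, f (fibP p q n) = fibP (f p) (f q) n
  | 0 => by simp [fibP]
  | 1 => by simp [fibP]
  | 2 => by simp [fibP]
  | n + 3 => by
    simp only [fibP, map_add, map_mul, map_pow, fibP_map f p q (n + 2),
      fibP_map f p q (n + 1)]

lemma SfP_map (f : R →+* S) (p q : R) : ∀ n k, f (SfP p q n k) = SfP (f p) (f q) n k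
  | 0, 0 => by simp [SfP]
  | 0, _ + 1 => by simp [SfP]
  | n + 1, 0 => by
    simp only [SfP, map_mul, fibP_map f p q 0, SfP_map f p q n 0]
  | n + 1, k + 1 => by
    simp only [SfP, map_add, map_mul, fibP_map f p q (k + 1), SfP_map f p q n k,
      SfP_map f p q n (k + 1)]

lemma fibP_zero_left (q : R) : ∀ n, fibP 0 q (n + 1) = q ^ (n + 1)
  | 0 => by simp [fibP]
  | 1 => by simp [fibP]
  | n + 2 => by
    show fibP 0 q (n + 3) = _
    rw [fibP, fibP_zero_left q (n + 1)]
    ring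

lemma SfP_eq_zero (p q : R) : ∀ n k, n < k → SfP p q n k = 0
  | 0, _ + 1, _ => rfl
  | n + 1, k + 1, h => by
    rw [SfP, SfP_eq_zero p q n k (by omega), SfP_eq_zero p q n (k + 1) (by omega)]
    ring

lemma gaussBinom_eq_zero : ∀ n k, n < k → gaussBinom n k = 0
  | 0, _ + 1, _ => rfl
  | n + 1, k + 1, h => by
    rw [gaussBinom, gaussBinom_eq_zero n k (by omega),
      gaussBinom_eq_zero n (k + 1) (by omega)]
    ring

lemma SfP_zero_succ (p q : R) (n : ℕ) : SfP p q (n + 1) 0 = 0 := by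
  rw [SfP]; show (0 : R) * _ = 0; ring

lemma gaussBinom_zero : ∀ n, gaussBinom n 0 = 1
  | 0 => rfl
  | _ + 1 => rfl

lemma key : ∀ n k, 1 ≤ k → k ≤ n →
    SfP (0 : Polynomial ℤ) X n k = X ^ (n - k) * gaussBinom (n - 1) (k - 1)
  | 0, k, hk, hkn => by omega
  | n + 1, 1, _, _ => by
    rw [SfP, fibP_zero_left]
    match n with
    | 0 => simp [SfP, gaussBinom]
    | m + 1 =>
      rw [SfP_zero_succ, key (m + 1) 1 le_rfl (by omega)]
      show (0 : Polynomial ℤ) + X ^ 1 * (X ^ (m + 1 - 1) * gaussBinom (m + 1 - 1) 0)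
          = X ^ (m + 1 + 1 - 1) * gaussBinom (m + 1 + 1 - 1) 0
      rw [show (m + 1 - 1 : ℕ) = m by omega, show (m + 1 + 1 - 1 : ℕ) = m + 1 by omega]
      rw [gaussBinom_zero, gaussBinom_zero]
      ring
  | n + 1, k + 2, _, hkn => by
    rw [SfP, fibP_zero_left, key n (k + 1) (by omega) (by omega)]
    rcases Nat.lt_or_ge (k + 2) (n + 1) with h | h
    · rw [key n (k + 2) (by omega) (by omega)]
      obtain ⟨d, rfl⟩ : ∃ d, n = k + 2 + d := ⟨n - k - 2, by omega⟩
      rw [show (k + 2 + d - (k + 1) : ℕ) = d + 1 by omega,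
        show (k + 2 + d - (k + 2) : ℕ) = d by omega,
        show (k + 2 + d - 1 : ℕ) = k + 1 + d by omega,
        show (k + 2 + d + 1 - 1 : ℕ) = (k + 1 + d) + 1 by omega,
        show (k + 2 + d + 1 - (k + 2) : ℕ) = d + 1 by omega,
        show (k + 1 - 1 : ℕ) = k by omega, show (k + 2 - 1 : ℕ) = k + 1 by omega,
        gaussBinom]
      ring
    · have hn : n = k + 1 := by omega
      subst hn
      rw [SfP_eq_zero _ _ (k + 1) (k + 2) (by omega)]
      rw [show (k + 1 - 1 : ℕ) = k from rfl, show (k + 1 + 1 - 1 : ℕ) = k + 1 from rfl,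
        show gaussBinom (k + 1) (k + 1) = gaussBinom k k + X ^ (k + 1) * gaussBinom k (k + 1)
          from rfl,
        gaussBinom_eq_zero k (k + 1) (by omega)]
      rw [show (k + 1 - (k + 1) : ℕ) = 0 by omega, show (k + 1 + 1 - (k + 2) : ℕ) = 0 by omega]
      ring

end Aux

theorem SfP_coeff_p_zero (n k : ℕ) (hk : 1 ≤ k) (hkn : k ≤ n) :
    (SfP (Polynomial.X : Polynomial (Polynomial ℤ)) (Polynomial.C Polynomial.X) n k).coeff 0 =
      Polynomial.X ^ (n - k) * gaussBinom (n - 1) (k - 1) := by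
  rw [Polynomial.coeff_zero_eq_eval_zero]
  have := SfP_map (Polynomial.evalRingHom (0 : Polynomial ℤ))
    (Polynomial.X : Polynomial (Polynomial ℤ)) (Polynomial.C Polynomial.X) n k
  simp only [coe_evalRingHom, eval_X, eval_C] at this
  rw [this, key n k hk hkn]
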